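/- arXiv:math-ph/0001031 — 3 statements merged into one kernel-verified Lean document; each statement's English description precedes it below -/
import Mathlib

section
/- Let p ≥ 1 and let F, G be C^p functions. Then |FG|_p ≤ ‖F‖_0 ‖G‖_p + ‖F‖_p ‖G‖_0 + 2^{p+1} |F|_{p-1} |G|_{p-1}, where ‖·‖_k is the sum of sup norms of order-k derivatives and |·|_k the cumulative norm. -/
open Finset

/-- The seminorm `‖F‖_k`: sup over `x` of the norm of the `k`-th derivative. -/
noncomputable def supDerivNorm {n : ℕ} (k : ℕ) (F : EuclideanSpace ℝ (Fin n) → ℝ) : ℝ :=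
  ⨆ x, ‖iteratedFDeriv ℝ k F x‖

/-- The cumulative C^p norm `|F|_p = Σ_{l=0}^p ‖F‖_l`. -/
noncomputable def cNorm {n : ℕ} (p : ℕ) (F : EuclideanSpace ℝ (Fin n) → ℝ) : ℝ :=
  ∑ l ∈ Finset.range (p + 1), supDerivNorm l F

lemma supDerivNorm_nonneg' {n : ℕ} {k : ℕ} {F : EuclideanSpace ℝ (Fin n) → ℝ}
    (h : BddAbove (Set.range fun x => ‖iteratedFDeriv ℝ k F x‖)) :
    0 ≤ supDerivNorm k F :=
  le_trans (norm_nonneg _) (le_ciSup h 0)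

lemma sum_two_pow_le (m : ℕ) : ∑ i ∈ Finset.range m, 2 ^ i ≤ 2 ^ m := by
  induction m with
  | zero => simp
  | succ k ih =>
    rw [Finset.sum_range_succ, pow_succ]
    omega

/-- For `p ≥ 1` and C^p functions `F, G` with bounded
derivatives up to order `p`,
`|FG|_p ≤ ‖F‖₀‖G‖_p + ‖F‖_p‖G‖₀ + 2^{p+1} |F|_{p-1} |G|_{p-1}`. -/
theorem cNorm_mul_le_refined {n : ℕ} (p : ℕ) (hp : 1 ≤ p)
    (F G : EuclideanSpace ℝ (Fin n) → ℝ)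
    (hF : ContDiff ℝ p F) (hG : ContDiff ℝ p G)
    (hFb : ∀ k ≤ p, BddAbove (Set.range fun x => ‖iteratedFDeriv ℝ k F x‖))
    (hGb : ∀ k ≤ p, BddAbove (Set.range fun x => ‖iteratedFDeriv ℝ k G x‖)) :
    cNorm p (F * G) ≤
      supDerivNorm 0 F * supDerivNorm p G + supDerivNorm p F * supDerivNorm 0 G +
        2 ^ (p + 1) * cNorm (p - 1) F * cNorm (p - 1) G := by
  obtain ⟨q, rfl⟩ : ∃ q, p = q + 1 := ⟨p - 1, (Nat.succ_pred_eq_of_pos hp).symm⟩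
  simp only [Nat.add_sub_cancel]
  set A := cNorm q F with hA
  set B := cNorm q G with hB
  have hFn : ∀ k, k ≤ q + 1 → 0 ≤ supDerivNorm k F :=
    fun k hk => supDerivNorm_nonneg' (hFb k hk)
  have hGn : ∀ k, k ≤ q + 1 → 0 ≤ supDerivNorm k G :=
    fun k hk => supDerivNorm_nonneg' (hGb k hk)
  have hFle : ∀ i, i ≤ q → supDerivNorm i F ≤ A := by
    intro i hi
    exact Finset.single_le_sum
      (fun j hj => hFn j (le_trans (Nat.lt_succ_iff.mp (Finset.mem_range.mp hj)) (Nat.le_succ q)))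
      (Finset.mem_range.mpr (Nat.lt_succ_of_le hi))
  have hGle : ∀ i, i ≤ q → supDerivNorm i G ≤ B := by
    intro i hi
    exact Finset.single_le_sum
      (fun j hj => hGn j (le_trans (Nat.lt_succ_iff.mp (Finset.mem_range.mp hj)) (Nat.le_succ q)))
      (Finset.mem_range.mpr (Nat.lt_succ_of_le hi))
  have hA0 : 0 ≤ A := Finset.sum_nonneg fun j hj =>
    hFn j (le_trans (Nat.lt_succ_iff.mp (Finset.mem_range.mp hj)) (Nat.le_succ q))
  have hB0 : 0 ≤ B := Finset.sum_nonneg fun j hj =>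
    hGn j (le_trans (Nat.lt_succ_iff.mp (Finset.mem_range.mp hj)) (Nat.le_succ q))
  have hAB : (0:ℝ) ≤ A * B := mul_nonneg hA0 hB0
  -- key pointwise-to-sup Leibniz bound
  have key : ∀ l, l ≤ q + 1 → supDerivNorm l (F * G) ≤
      ∑ i ∈ Finset.range (l + 1),
        (l.choose i : ℝ) * supDerivNorm i F * supDerivNorm (l - i) G := by
    intro l hl
    apply ciSup_le
    intro x
    calc ‖iteratedFDeriv ℝ l (F * G) x‖
        ≤ ∑ i ∈ Finset.range (l + 1),
            (l.choose i : ℝ) * ‖iteratedFDeriv ℝ i F x‖ * ‖iteratedFDeriv ℝ (l - i) G x‖ := by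
          have := norm_iteratedFDeriv_mul_le (𝕜 := ℝ) hF hG x (n := l) (by exact_mod_cast hl)
          simpa [Pi.mul_def] using this
      _ ≤ ∑ i ∈ Finset.range (l + 1),
            (l.choose i : ℝ) * supDerivNorm i F * supDerivNorm (l - i) G := by
          apply Finset.sum_le_sum
          intro i hi
          have hi' : i ≤ q + 1 := le_trans (Nat.lt_succ_iff.mp (Finset.mem_range.mp hi)) hl
          have hli : l - i ≤ q + 1 := le_trans (Nat.sub_le l i) hl
          have h1 : ‖iteratedFDeriv ℝ i F x‖ ≤ supDerivNorm i F := le_ciSup (hFb i hi') x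
          have h2 : ‖iteratedFDeriv ℝ (l - i) G x‖ ≤ supDerivNorm (l - i) G :=
            le_ciSup (hGb _ hli) x
          exact mul_le_mul (mul_le_mul_of_nonneg_left h1 (Nat.cast_nonneg _)) h2
            (norm_nonneg _) (mul_nonneg (Nat.cast_nonneg _) (hFn i hi'))
  -- bound for low orders
  have bound_low : ∀ l, l ≤ q → supDerivNorm l (F * G) ≤ (2 ^ l : ℝ) * (A * B) := by
    intro l hl
    refine (key l (le_trans hl (Nat.le_succ q))).trans ?_
    calc ∑ i ∈ Finset.range (l + 1),
          (l.choose i : ℝ) * supDerivNorm i F * supDerivNorm (l - i) G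
        ≤ ∑ i ∈ Finset.range (l + 1), (l.choose i : ℝ) * (A * B) := by
          apply Finset.sum_le_sum
          intro i hi
          have hi' : i ≤ l := Nat.lt_succ_iff.mp (Finset.mem_range.mp hi)
          rw [mul_assoc]
          refine mul_le_mul_of_nonneg_left ?_ (Nat.cast_nonneg _)
          exact mul_le_mul (hFle i (hi'.trans hl)) (hGle _ ((Nat.sub_le l i).trans hl))
            (hGn _ (le_trans ((Nat.sub_le l i).trans hl) (Nat.le_succ q))) hA0
      _ = (2 ^ l : ℝ) * (A * B) := by
          rw [← Finset.sum_mul]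
          congr 1
          exact_mod_cast congrArg (Nat.cast : ℕ → ℝ) (Nat.sum_range_choose l)
  -- sum of low-order bounds
  have low_sum : ∑ l ∈ Finset.range (q + 1), supDerivNorm l (F * G)
      ≤ (2 ^ (q + 1) : ℝ) * (A * B) := by
    calc ∑ l ∈ Finset.range (q + 1), supDerivNorm l (F * G)
        ≤ ∑ l ∈ Finset.range (q + 1), (2 ^ l : ℝ) * (A * B) :=
          Finset.sum_le_sum fun l hl =>
            bound_low l (Nat.lt_succ_iff.mp (Finset.mem_range.mp hl))
      _ = (∑ l ∈ Finset.range (q + 1), (2 ^ l : ℝ)) * (A * B) := by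
          rw [Finset.sum_mul]
      _ ≤ (2 ^ (q + 1) : ℝ) * (A * B) := by
          refine mul_le_mul_of_nonneg_right ?_ hAB
          exact_mod_cast Nat.cast_le.mpr (sum_two_pow_le (q + 1)) |>.trans_eq (by push_cast; ring)
  -- bound for top order
  have top : supDerivNorm (q + 1) (F * G) ≤
      supDerivNorm 0 F * supDerivNorm (q + 1) G + supDerivNorm (q + 1) F * supDerivNorm 0 G +
        (2 ^ (q + 1) : ℝ) * (A * B) := by
    refine (key (q + 1) le_rfl).trans ?_
    rw [Finset.sum_range_succ, Finset.sum_range_succ']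
    simp only [Nat.choose_zero_right, Nat.choose_self, Nat.cast_one, one_mul, Nat.sub_zero,
      Nat.sub_self]
    have mid : ∑ i ∈ Finset.range q,
        ((q + 1).choose (i + 1) : ℝ) * supDerivNorm (i + 1) F * supDerivNorm (q + 1 - (i + 1)) G
        ≤ (2 ^ (q + 1) : ℝ) * (A * B) := by
      calc ∑ i ∈ Finset.range q,
            ((q + 1).choose (i + 1) : ℝ) * supDerivNorm (i + 1) F
              * supDerivNorm (q + 1 - (i + 1)) G
          ≤ ∑ i ∈ Finset.range q, ((q + 1).choose (i + 1) : ℝ) * (A * B) := by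
            apply Finset.sum_le_sum
            intro i hi
            have hi' : i + 1 ≤ q := Nat.succ_le_of_lt (Finset.mem_range.mp hi)
            have hsub : q + 1 - (i + 1) ≤ q := by omega
            rw [mul_assoc]
            refine mul_le_mul_of_nonneg_left ?_ (Nat.cast_nonneg _)
            exact mul_le_mul (hFle _ hi') (hGle _ hsub)
              (hGn _ (hsub.trans (Nat.le_succ q))) hA0
        _ = (∑ i ∈ Finset.range q, (((q + 1).choose (i + 1) : ℕ) : ℝ)) * (A * B) := by
            rw [Finset.sum_mul]
        _ ≤ (2 ^ (q + 1) : ℝ) * (A * B) := by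
            refine mul_le_mul_of_nonneg_right ?_ hAB
            have hns : ∑ i ∈ Finset.range q, (q + 1).choose (i + 1) ≤ 2 ^ (q + 1) := by
              calc ∑ i ∈ Finset.range q, (q + 1).choose (i + 1)
                  ≤ ∑ i ∈ Finset.range (q + 1), (q + 1).choose (i + 1) :=
                    Finset.sum_le_sum_of_subset (Finset.range_subset_range.mpr (Nat.le_succ q))
                _ ≤ ∑ i ∈ Finset.range (q + 2), (q + 1).choose i := by
                    conv_rhs => rw [Finset.sum_range_succ']
                    exact Nat.le_add_right _ _
                _ = 2 ^ (q + 1) := Nat.sum_range_choose (q + 1)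
            calc (∑ i ∈ Finset.range q, (((q + 1).choose (i + 1) : ℕ) : ℝ))
                = ((∑ i ∈ Finset.range q, (q + 1).choose (i + 1) : ℕ) : ℝ) := by push_cast; ring
              _ ≤ ((2 ^ (q + 1) : ℕ) : ℝ) := Nat.cast_le.mpr hns
              _ = (2 ^ (q + 1) : ℝ) := by push_cast; ring
    linarith [mid]
  -- assemble
  have expand : cNorm (q + 1) (F * G)
      = ∑ l ∈ Finset.range (q + 1), supDerivNorm l (F * G) + supDerivNorm (q + 1) (F * G) := by
    rw [cNorm, Finset.sum_range_succ]
  rw [expand]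
  have htwo : (2 : ℝ) ^ (q + 1 + 1) = 2 ^ (q + 1) + 2 ^ (q + 1) := by ring
  calc ∑ l ∈ Finset.range (q + 1), supDerivNorm l (F * G) + supDerivNorm (q + 1) (F * G)
      ≤ (2 ^ (q + 1) : ℝ) * (A * B) +
        (supDerivNorm 0 F * supDerivNorm (q + 1) G + supDerivNorm (q + 1) F * supDerivNorm 0 G +
          (2 ^ (q + 1) : ℝ) * (A * B)) := add_le_add low_sum top
    _ = supDerivNorm 0 F * supDerivNorm (q + 1) G + supDerivNorm (q + 1) F * supDerivNorm 0 G +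
        2 ^ (q + 1 + 1) * A * B := by rw [htwo]; ring
end

section
/- Let (X, ‖·‖) be a Banach space with three seminorms n₀ ≤ n₁ ≤ n₂ on a ball B around a point E, let 0 < δ < 1 and Q ≥ 1 with q := Q|λ| < 1 for some λ. Suppose (f_n)_{n≥1} is a sequence in X satisfying n₀(f₁), n₁(f₁), n₂(f₁) ≤ q, and the recursive bounds n₀(f_{n+1}) ≤ q·n₀(f_n), n₁(f_{n+1}) ≤ q·(n₀(f_n)^δ + n₁(f_n)), and n₂(f_{n+1}) ≤ q·(n₁(f_n)^δ + n₂(f_n)). Then for all n ≥ 1: n₀(f_n) ≤ q^n, n₁(f_n) ≤ B·q^{nδ}, and n₂(f_n) ≤ C·max{B^δ, 1}·q^{nδ²}, where B = q^{1-δ}/(1-q^{1-δ}) and C = q^{1-δ²}/(1-q^{1-δ²}). In particular, if n₂ dominates the Banach norm, then Σ f_n converges. -/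
/-!
All three bounds come from one scalar fact: if `u₁ ≤ q` and `u_{n+1} ≤ q (v_n + u_n)` with
`v_n ≤ K ρⁿ`, then `u_n ≤ A ρⁿ` as soon as `q (K + A) ≤ A ρ` and `K + A ≥ 1`. For `n₀` take
`v = 0`, `ρ = q`; for `n₁` take `v_n = n₀(f_n)^δ ≤ (q^δ)ⁿ`, `ρ = q^δ`, `A = B`; for `n₂` take
`v_n = n₁(f_n)^δ ≤ B^δ (q^{δ²})ⁿ`, `ρ = q^{δ²}`, `A = C max{B^δ, 1}`. The conditions on `A` are the
identities `q (1 + B) = B q^δ` and `q (1 + C) = C q^{δ²}`. Summability is then comparison with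
the geometric series of ratio `q^{δ²} < 1`.
-/

open Real

theorem le_mul_pow_of_le_mul_add {u v : ℕ → ℝ} {q ρ K A : ℝ} (hq : 0 ≤ q) (hρ : 0 ≤ ρ)
    (hA : q * (K + A) ≤ A * ρ) (hKA : 1 ≤ K + A) (h1 : u 1 ≤ q)
    (hv : ∀ n ≥ 1, v n ≤ K * ρ ^ n) (hrec : ∀ n ≥ 1, u (n + 1) ≤ q * (v n + u n)) :
    ∀ n ≥ 1, u n ≤ A * ρ ^ n := by
  intro n hn
  induction n, hn using Nat.le_induction with
  | base =>
    calc u 1 ≤ q := h1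
      _ ≤ q * (K + A) := le_mul_of_one_le_right hq hKA
      _ ≤ A * ρ ^ 1 := by rwa [pow_one]
  | succ n hn ih =>
    calc u (n + 1) ≤ q * (v n + u n) := hrec n hn
      _ ≤ q * (K * ρ ^ n + A * ρ ^ n) := by gcongr; exact hv n hn
      _ = q * (K + A) * ρ ^ n := by ring
      _ ≤ A * ρ * ρ ^ n := by gcongr
      _ = A * ρ ^ (n + 1) := by ring

theorem rpow_le_mul_pow_of_le_mul_pow {x A ρ δ : ℝ} {n : ℕ} (hx : 0 ≤ x) (hA : 0 ≤ A)
    (hρ : 0 ≤ ρ) (hδ : 0 ≤ δ) (h : x ≤ A * ρ ^ n) : x ^ δ ≤ A ^ δ * (ρ ^ δ) ^ n :=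
  calc x ^ δ ≤ (A * ρ ^ n) ^ δ := rpow_le_rpow hx h hδ
    _ = A ^ δ * (ρ ^ δ) ^ n := by
      rw [mul_rpow hA (by positivity), rpow_pow_comm hρ]

theorem mul_one_add_div_one_sub_rpow {q δ : ℝ} (hq : 0 < q) (hb : q ^ (1 - δ) < 1) :
    q * (1 + q ^ (1 - δ) / (1 - q ^ (1 - δ))) = q ^ (1 - δ) / (1 - q ^ (1 - δ)) * q ^ δ := by
  have hne : 1 - q ^ (1 - δ) ≠ 0 := by linarith
  have hq_eq : q ^ (1 - δ) * q ^ δ = q := by rw [← rpow_add hq]; simp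
  rw [div_mul_eq_mul_div, hq_eq]
  field_simp
  ring

theorem summable_of_norm_le_mul_pow {E : Type*} [NormedAddCommGroup E] [CompleteSpace E]
    {f : ℕ → E} {A ρ : ℝ} (hρ0 : 0 ≤ ρ) (hρ1 : ρ < 1) (h : ∀ n ≥ 1, ‖f n‖ ≤ A * ρ ^ n) :
    Summable f :=
  .of_norm_bounded_eventually_nat ((summable_geometric_of_lt_one hρ0 hρ1).mul_left A) <|
    Filter.eventually_atTop.2 ⟨1, h⟩

theorem abstract_iteration_bounds_general
    {X : Type*} [NormedAddCommGroup X] [CompleteSpace X]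
    (n0 n1 n2 : X → ℝ) (δ q : ℝ)
    (hq0 : 0 < q) (hq1 : q < 1)
    (hδ0 : 0 < δ) (hδ1 : δ < 1)
    (f : ℕ → X)
    (h0nonneg : ∀ x, 0 ≤ n0 x)
    (h01 : ∀ x, n0 x ≤ n1 x)
    (hinit0 : n0 (f 1) ≤ q) (hinit1 : n1 (f 1) ≤ q) (hinit2 : n2 (f 1) ≤ q)
    (hrec0 : ∀ n ≥ 1, n0 (f (n + 1)) ≤ q * n0 (f n))
    (hrec1 : ∀ n ≥ 1, n1 (f (n + 1)) ≤ q * ((n0 (f n)) ^ δ + n1 (f n)))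
    (hrec2 : ∀ n ≥ 1, n2 (f (n + 1)) ≤ q * ((n1 (f n)) ^ δ + n2 (f n))) :
    (∀ n ≥ 1, n0 (f n) ≤ q ^ (n : ℝ)) ∧
    (∀ n ≥ 1, n1 (f n) ≤ (q ^ (1 - δ) / (1 - q ^ (1 - δ))) * q ^ ((n : ℝ) * δ)) ∧
    (∀ n ≥ 1, n2 (f n) ≤
      (q ^ (1 - δ ^ 2) / (1 - q ^ (1 - δ ^ 2))) *
        max ((q ^ (1 - δ) / (1 - q ^ (1 - δ))) ^ δ) 1 * q ^ ((n : ℝ) * δ ^ 2)) ∧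
    ((∀ x, ‖x‖ ≤ n2 x) → Summable f) := by
  have hb : q ^ (1 - δ) < 1 := rpow_lt_one hq0.le hq1 (by linarith)
  have hc : q ^ (1 - δ ^ 2) < 1 := rpow_lt_one hq0.le hq1 (by nlinarith)
  set B := q ^ (1 - δ) / (1 - q ^ (1 - δ))
  set C := q ^ (1 - δ ^ 2) / (1 - q ^ (1 - δ ^ 2))
  set M := max (B ^ δ) 1
  have hB : 0 ≤ B := div_nonneg (by positivity) (by linarith)
  have hC : 0 ≤ C := div_nonneg (by positivity) (by linarith)
  have hM : 1 ≤ M := le_max_right _ _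
  have hqδ : q ^ (δ ^ 2) = (q ^ δ) ^ δ := by rw [sq, rpow_mul hq0.le]
  have bound0 : ∀ n ≥ 1, n0 (f n) ≤ 1 * q ^ n :=
    le_mul_pow_of_le_mul_add (v := 0) (K := 0) hq0.le hq0.le (by simp) (by simp) hinit0 (by simp)
      (by simpa using hrec0)
  have bound1 : ∀ n ≥ 1, n1 (f n) ≤ B * (q ^ δ) ^ n :=
    le_mul_pow_of_le_mul_add hq0.le (by positivity)
      (mul_one_add_div_one_sub_rpow hq0 hb).le (by linarith) hinit1
      (fun n hn => by
        simpa using rpow_le_mul_pow_of_le_mul_pow (h0nonneg _) zero_le_one hq0.le hδ0.le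
          (bound0 n hn))
      hrec1
  have bound2 : ∀ n ≥ 1, n2 (f n) ≤ C * M * (q ^ (δ ^ 2)) ^ n :=
    le_mul_pow_of_le_mul_add (K := M) hq0.le (by positivity)
      (le_of_eq <| by linear_combination M * mul_one_add_div_one_sub_rpow hq0 hc)
      (by nlinarith) hinit2
      (fun n hn => by
        rw [hqδ]
        calc n1 (f n) ^ δ ≤ B ^ δ * ((q ^ δ) ^ δ) ^ n :=
              rpow_le_mul_pow_of_le_mul_pow ((h0nonneg _).trans (h01 _)) hB (by positivity)
                hδ0.le (bound1 n hn)
          _ ≤ M * ((q ^ δ) ^ δ) ^ n := by gcongr; exact le_max_left _ _)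
      hrec2
  refine ⟨fun n hn => ?_, fun n hn => ?_, fun n hn => ?_, fun hdom => ?_⟩
  · simpa [rpow_natCast] using bound0 n hn
  · rw [mul_comm (n : ℝ), rpow_mul_natCast hq0.le]; exact bound1 n hn
  · rw [mul_comm (n : ℝ), rpow_mul_natCast hq0.le]; exact bound2 n hn
  · exact summable_of_norm_le_mul_pow (by positivity) (rpow_lt_one hq0.le hq1 (by positivity))
      fun n hn => (hdom _).trans (bound2 n hn)

/-- Abstract iteration theorem: in a Banach space `X` with
three ordered seminorms `n₀ ≤ n₁ ≤ n₂`, if `q = Q|λ| ∈ (0,1)` and the sequence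
`(f_n)_{n ≥ 1}` satisfies the initial bounds `nᵢ(f₁) ≤ q` and the recursive
bounds `n₀(f_{n+1}) ≤ q n₀(f_n)`, `n₁(f_{n+1}) ≤ q (n₀(f_n)^δ + n₁(f_n))`,
`n₂(f_{n+1}) ≤ q (n₁(f_n)^δ + n₂(f_n))`, then
`n₀(f_n) ≤ q^n`, `n₁(f_n) ≤ B q^{nδ}`, `n₂(f_n) ≤ C max{B^δ,1} q^{nδ²}` with
`B = q^{1-δ}/(1-q^{1-δ})`, `C = q^{1-δ²}/(1-q^{1-δ²})`; and if `n₂` dominates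
the Banach norm then `Σ f_n` converges. -/
theorem abstract_iteration_bounds
    {X : Type*} [NormedAddCommGroup X] [NormedSpace ℝ X] [CompleteSpace X]
    (n0 n1 n2 : X → ℝ) (Q lam δ q : ℝ)
    (hQ : 1 ≤ Q) (hq_def : q = Q * |lam|) (hq0 : 0 < q) (hq1 : q < 1)
    (hδ0 : 0 < δ) (hδ1 : δ < 1)
    (f : ℕ → X)
    (h0nonneg : ∀ x, 0 ≤ n0 x)
    (h01 : ∀ x, n0 x ≤ n1 x) (h12 : ∀ x, n1 x ≤ n2 x)
    (hinit0 : n0 (f 1) ≤ q) (hinit1 : n1 (f 1) ≤ q) (hinit2 : n2 (f 1) ≤ q)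
    (hrec0 : ∀ n ≥ 1, n0 (f (n + 1)) ≤ q * n0 (f n))
    (hrec1 : ∀ n ≥ 1, n1 (f (n + 1)) ≤ q * ((n0 (f n)) ^ δ + n1 (f n)))
    (hrec2 : ∀ n ≥ 1, n2 (f (n + 1)) ≤ q * ((n1 (f n)) ^ δ + n2 (f n))) :
    (∀ n ≥ 1, n0 (f n) ≤ q ^ (n : ℝ)) ∧
    (∀ n ≥ 1, n1 (f n) ≤ (q ^ (1 - δ) / (1 - q ^ (1 - δ))) * q ^ ((n : ℝ) * δ)) ∧
    (∀ n ≥ 1, n2 (f n) ≤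
      (q ^ (1 - δ ^ 2) / (1 - q ^ (1 - δ ^ 2))) *
        max ((q ^ (1 - δ) / (1 - q ^ (1 - δ))) ^ δ) 1 * q ^ ((n : ℝ) * δ ^ 2)) ∧
    ((∀ x, ‖x‖ ≤ n2 x) → Summable f) :=
  abstract_iteration_bounds_general n0 n1 n2 δ q hq0 hq1 hδ0 hδ1 f h0nonneg h01 hinit0 hinit1 hinit2
    hrec0 hrec1 hrec2
end

section
/- Let G be a connected multigraph that is 2-edge-connected (one-particle irreducible) with two distinguished vertices v₁ and v₂, in which every vertex has even degree after counting two external legs at v₁, v₂ (so internally every vertex has even incidence). Let T be a spanning tree of G and let θ be the unique path in T from v₁ to v₂. Then for every edge ℓ ∈ θ there exist two distinct edges ℓ₁, ℓ₂ of G not in T such that for i ∈ {1,2}, the graph obtained from T by removing ℓ and adding ℓ_i is again a spanning tree of G; equivalently, ℓ lies on the fundamental cycles of both ℓ₁ and ℓ₂ with respect to T. -/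
/-- Adjacency via an edge in the subset `S` of edges of a multigraph given by
its endpoint map `ends`. -/
def EdgeRel {V E : Type*} (ends : E → V × V) (S : Set E) (a b : V) : Prop :=
  ∃ e ∈ S, ends e = (a, b) ∨ ends e = (b, a)

/-- The edge set `S` spans and connects the whole vertex set. -/
def ConnOn {V E : Type*} (ends : E → V × V) (S : Set E) : Prop :=
  ∀ a b : V, Relation.ReflTransGen (EdgeRel ends S) a b

/-- `T` is a spanning tree: it connects all vertices and is edge-minimal. -/
def IsSpanningTree {V E : Type*} (ends : E → V × V) (T : Set E) : Prop :=
  ConnOn ends T ∧ ∀ e ∈ T, ¬ ConnOn ends (T \ {e})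

/-- Degree of `v` in the multigraph (each loop counted twice). -/
def mdeg {V E : Type*} [Fintype E] [DecidableEq V] (ends : E → V × V) (v : V) : ℕ :=
  ∑ e : E, ((if (ends e).1 = v then 1 else 0) + (if (ends e).2 = v then 1 else 0))

/-!
Let `A` be the set of vertices joined to `v₁` in `T \ {ℓ}`, so `v₂ ∉ A`. The sum of the degrees
over `A` is odd (only `v₁` contributes an odd term), and it has the parity of the number of edges
leaving `A`; hence that number is odd. The edge `ℓ` leaves `A`, and since `G - ℓ` is connected
some other edge does too; by parity there are then at least two edges other than `ℓ` leaving `A`.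
No such edge lies in `T`, and each of them reconnects the two components of `T \ {ℓ}`, so
exchanging it for `ℓ` yields a spanning tree.
-/

open Relation Finset

theorem exists_pair_ne_of_odd_card {α : Type*} {s : Finset α} (hs : Odd #s) {a b : α}
    (ha : a ∈ s) (hb : b ∈ s) (hab : a ≠ b) :
    ∃ x ∈ s, ∃ y ∈ s, x ≠ a ∧ y ≠ a ∧ x ≠ y := by
  classical
  have h₂ : 1 < #s := Finset.one_lt_card.mpr ⟨a, ha, b, hb, hab⟩
  have h₃ : 1 < #(s.erase a) := by
    rw [card_erase_of_mem ha]
    obtain ⟨k, hk⟩ := hs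
    omega
  obtain ⟨x, hx, y, hy, hxy⟩ := Finset.one_lt_card.mp h₃
  exact ⟨x, mem_of_mem_erase hx, y, mem_of_mem_erase hy, ne_of_mem_erase hx, ne_of_mem_erase hy,
    hxy⟩

namespace EdgeRel

variable {V E : Type*} {ends : E → V × V} {S S' : Set E} {a b : V}

theorem symm (h : EdgeRel ends S a b) : EdgeRel ends S b a :=
  let ⟨e, he, h⟩ := h
  ⟨e, he, h.symm⟩

theorem mono (hSS' : S ⊆ S') (h : EdgeRel ends S a b) : EdgeRel ends S' a b :=
  let ⟨e, he, h⟩ := h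
  ⟨e, hSS' he, h⟩

theorem of_mem {e : E} (he : e ∈ S) : EdgeRel ends S (ends e).1 (ends e).2 :=
  ⟨e, he, Or.inl rfl⟩

instance : Std.Symm (EdgeRel ends S) := ⟨fun _ _ => symm⟩

theorem reflTransGen_symm (h : ReflTransGen (EdgeRel ends S) a b) :
    ReflTransGen (EdgeRel ends S) b a :=
  ReflTransGen.stdSymm.symm _ _ h

theorem reflTransGen_mono (hSS' : S ⊆ S') (h : ReflTransGen (EdgeRel ends S) a b) :
    ReflTransGen (EdgeRel ends S') a b :=
  ReflTransGen.mono (fun _ _ => mono hSS') _ _ h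

theorem reach_or_reach_of_not_reach {c d : V}
    (h : ∀ v, ReflTransGen (EdgeRel ends S) a v ∨ ReflTransGen (EdgeRel ends S) b v)
    (hcd : ¬ ReflTransGen (EdgeRel ends S) c d) (v : V) :
    ReflTransGen (EdgeRel ends S) c v ∨ ReflTransGen (EdgeRel ends S) d v := by
  have via {x y : V} (hx : ReflTransGen (EdgeRel ends S) x c)
      (hy : ReflTransGen (EdgeRel ends S) y d)
      (hxy : ∀ v, ReflTransGen (EdgeRel ends S) x v ∨ ReflTransGen (EdgeRel ends S) y v) :
      ReflTransGen (EdgeRel ends S) c v ∨ ReflTransGen (EdgeRel ends S) d v :=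
    (hxy v).imp (reflTransGen_symm hx).trans (reflTransGen_symm hy).trans
  rcases h c with hac | hbc <;> rcases h d with had | hbd
  · exact absurd ((reflTransGen_symm hac).trans had) hcd
  · exact via hac hbd h
  · exact via hbc had fun v => (h v).symm
  · exact absurd ((reflTransGen_symm hbc).trans hbd) hcd

end EdgeRel

namespace ConnOn

variable {V E : Type*} {ends : E → V × V} {S S' : Set E} {f : E}

theorem mono (hS : ConnOn ends S) (hSS' : S ⊆ S') : ConnOn ends S' :=
  fun a b => EdgeRel.reflTransGen_mono hSS' (hS a b)

theorem reach_or_reach_of_insert (hc : ConnOn ends (insert f S)) (v : V) :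
    ReflTransGen (EdgeRel ends S) (ends f).1 v ∨ ReflTransGen (EdgeRel ends S) (ends f).2 v := by
  induction hc (ends f).1 v with
  | refl => exact Or.inl .refl
  | tail _ hstep ih =>
    obtain ⟨e, he, hends⟩ := hstep
    rcases Set.mem_insert_iff.mp he with rfl | he
    · rcases hends with h | h <;> rw [h]
      exacts [Or.inr .refl, Or.inl .refl]
    · exact ih.imp (·.tail ⟨e, he, hends⟩) (·.tail ⟨e, he, hends⟩)

theorem of_reach_or_reach
    (h : ∀ v, ReflTransGen (EdgeRel ends S) (ends f).1 v ∨
      ReflTransGen (EdgeRel ends S) (ends f).2 v) :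
    ConnOn ends (insert f S) := by
  have hsub : S ⊆ insert f S := Set.subset_insert f S
  have hroot (v : V) : ReflTransGen (EdgeRel ends (insert f S)) (ends f).1 v :=
    (h v).elim (EdgeRel.reflTransGen_mono hsub) fun h₂ =>
      (ReflTransGen.single (EdgeRel.of_mem (Set.mem_insert f S))).trans
        (EdgeRel.reflTransGen_mono hsub h₂)
  exact fun a b => (EdgeRel.reflTransGen_symm (hroot a)).trans (hroot b)

theorem of_insert_of_reach (hc : ConnOn ends (insert f S))
    (hf : ReflTransGen (EdgeRel ends S) (ends f).1 (ends f).2) : ConnOn ends S := by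
  have hroot (v : V) : ReflTransGen (EdgeRel ends S) (ends f).1 v :=
    (hc.reach_or_reach_of_insert v).elim id hf.trans
  exact fun a b => (EdgeRel.reflTransGen_symm (hroot a)).trans (hroot b)

theorem exchange {g : E} (hc : ConnOn ends (insert f S))
    (hg : ¬ ReflTransGen (EdgeRel ends S) (ends g).1 (ends g).2) :
    ConnOn ends (insert g S) :=
  of_reach_or_reach (EdgeRel.reach_or_reach_of_not_reach hc.reach_or_reach_of_insert hg)

end ConnOn

namespace IsSpanningTree

variable {V E : Type*} {ends : E → V × V} {T : Set E} {ℓ : E}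

theorem not_reach_of_mem (hT : IsSpanningTree ends T) (hℓ : ℓ ∈ T) :
    ¬ ReflTransGen (EdgeRel ends (T \ {ℓ})) (ends ℓ).1 (ends ℓ).2 := fun h =>
  hT.2 ℓ hℓ (ConnOn.of_insert_of_reach (by rw [Set.insert_sdiff_self_of_mem hℓ]; exact hT.1) h)

theorem exchange (hT : IsSpanningTree ends T) (hℓ : ℓ ∈ T) {f : E}
    (hf : ¬ ReflTransGen (EdgeRel ends (T \ {ℓ})) (ends f).1 (ends f).2) :
    IsSpanningTree ends (insert f (T \ {ℓ})) := by
  refine ⟨ConnOn.exchange (by rw [Set.insert_sdiff_self_of_mem hℓ]; exact hT.1) hf,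
    fun g hg hconn => ?_⟩
  rcases hg with rfl | ⟨hgT, hgℓ⟩
  · exact hf (EdgeRel.reflTransGen_mono (Set.sdiff_singleton_subset_iff.mpr subset_rfl) (hconn _ _))
  · have hℓg : ℓ ∈ T \ {g} := ⟨hℓ, fun h => hgℓ (h ▸ rfl)⟩
    have hconn' : ConnOn ends (insert f ((T \ {g}) \ {ℓ})) :=
      hconn.mono fun x hx => hx.1.imp id fun hxTℓ => ⟨⟨hxTℓ.1, hx.2⟩, hxTℓ.2⟩
    have hℓ' : ¬ ReflTransGen (EdgeRel ends ((T \ {g}) \ {ℓ})) (ends ℓ).1 (ends ℓ).2 :=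
      fun h => hT.not_reach_of_mem hℓ
        (EdgeRel.reflTransGen_mono (Set.sdiff_subset_sdiff_left Set.sdiff_subset) h)
    exact hT.2 g hgT (Set.insert_sdiff_self_of_mem hℓg ▸ hconn'.exchange hℓ')

end IsSpanningTree

def IsCutEdge {V E : Type*} (ends : E → V × V) (A : Set V) (e : E) : Prop :=
  ¬((ends e).1 ∈ A ↔ (ends e).2 ∈ A)

section Cut

variable {V E : Type*} {ends : E → V × V} {S : Set E} {A : Set V}

instance [DecidablePred (· ∈ A)] : DecidablePred (IsCutEdge ends A) :=
  fun _ => inferInstanceAs (Decidable ¬(_ ↔ _))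

theorem exists_isCutEdge_of_reach {x y : V} (h : ReflTransGen (EdgeRel ends S) x y)
    (hx : x ∈ A) (hy : y ∉ A) : ∃ e ∈ S, IsCutEdge ends A e := by
  induction h with
  | refl => exact absurd hx hy
  | @tail b c _ hbc ih =>
    by_cases hb : b ∈ A
    · obtain ⟨e, he, hends⟩ := hbc
      refine ⟨e, he, fun hiff => ?_⟩
      rcases hends with h | h <;> rw [h] at hiff
      exacts [hy (hiff.mp hb), hy (hiff.mpr hb)]
    · exact ih hb

theorem not_isCutEdge_reach_of_mem {a : V} {e : E} (he : e ∈ S) :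
    ¬ IsCutEdge ends {v | ReflTransGen (EdgeRel ends S) a v} e := fun hcut =>
  hcut ⟨(·.tail (EdgeRel.of_mem he)), (·.tail (EdgeRel.of_mem he).symm)⟩

theorem not_reach_of_isCutEdge_reach {a : V} {e : E}
    (hcut : IsCutEdge ends {v | ReflTransGen (EdgeRel ends S) a v} e) :
    ¬ ReflTransGen (EdgeRel ends S) (ends e).1 (ends e).2 := fun h =>
  hcut ⟨(·.trans h), (·.trans (EdgeRel.reflTransGen_symm h))⟩

theorem sum_mdeg_mod_two [Fintype E] [DecidableEq V] (s : Finset V) :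
    (∑ v ∈ s, mdeg ends v) % 2 = #{e | IsCutEdge ends s e} % 2 := by
  classical
  have hsum : ∑ v ∈ s, mdeg ends v =
      ∑ e : E, ((if (ends e).1 ∈ s then 1 else 0) + (if (ends e).2 ∈ s then 1 else 0)) := by
    unfold mdeg
    rw [Finset.sum_comm]
    refine Finset.sum_congr rfl fun e _ => ?_
    rw [Finset.sum_add_distrib, Finset.sum_ite_eq, Finset.sum_ite_eq]
  rw [hsum, Finset.card_filter, Finset.sum_nat_mod]
  refine congrArg (· % 2) (Finset.sum_congr rfl fun e _ => ?_)
  by_cases h₁ : (ends e).1 ∈ s <;> by_cases h₂ : (ends e).2 ∈ s <;> simp [IsCutEdge, h₁, h₂]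

open Classical in
theorem odd_card_isCutEdge [Fintype V] [Fintype E] [DecidableEq V] {a : V} (ha : a ∈ A)
    (hodd : Odd (mdeg ends a)) (heven : ∀ v ∈ A, v ≠ a → Even (mdeg ends v)) :
    Odd #{e | IsCutEdge ends A e} := by
  have hdeg : Odd (∑ v ∈ A.toFinset, mdeg ends v) := by
    rw [← add_sum_erase _ _ (Set.mem_toFinset.mpr ha)]
    exact hodd.add_even (even_sum _ fun v hv =>
      heven v (Set.mem_toFinset.mp (mem_of_mem_erase hv)) (ne_of_mem_erase hv))
  have h := sum_mdeg_mod_two (ends := ends) A.toFinset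
  simp only [Set.coe_toFinset] at h
  exact Nat.odd_iff.mpr (h ▸ Nat.odd_iff.mp hdeg)

theorem ConnOn.isCutEdge_of_not_reach {T : Set E} {ℓ : E} (hT : ConnOn ends T) {a b : V}
    (hab : ¬ ReflTransGen (EdgeRel ends (T \ {ℓ})) a b) :
    IsCutEdge ends {v | ReflTransGen (EdgeRel ends (T \ {ℓ})) a v} ℓ := by
  obtain ⟨e, heT, he⟩ := exists_isCutEdge_of_reach (hT a b) ReflTransGen.refl hab
  obtain rfl : e = ℓ :=
    by_contra fun heℓ => not_isCutEdge_reach_of_mem (S := T \ {ℓ}) ⟨heT, heℓ⟩ he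
  exact he

end Cut

theorem two_overlapping_loops_general
    {V E : Type*} [Fintype V] [Fintype E] [DecidableEq V]
    (ends : E → V × V) (v₁ v₂ : V)
    (h1PI : ∀ e : E, ConnOn ends (Set.univ \ {e}))
    (heven : ∀ v : V, v ≠ v₁ → v ≠ v₂ → Even (mdeg ends v))
    (hodd1 : Odd (mdeg ends v₁))
    (T : Set E) (hT : IsSpanningTree ends T)
    (ℓ : E) (hℓT : ℓ ∈ T)
    (hpath : ¬ Relation.ReflTransGen (EdgeRel ends (T \ {ℓ})) v₁ v₂) :
    ∃ ℓ₁ ℓ₂ : E, ℓ₁ ∉ T ∧ ℓ₂ ∉ T ∧ ℓ₁ ≠ ℓ₂ ∧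
      IsSpanningTree ends (insert ℓ₁ (T \ {ℓ})) ∧
      IsSpanningTree ends (insert ℓ₂ (T \ {ℓ})) := by
  classical
  set A : Set V := {v | ReflTransGen (EdgeRel ends (T \ {ℓ})) v₁ v}
  have hv₁ : v₁ ∈ A := ReflTransGen.refl
  have hA_cut : Odd #{e | IsCutEdge ends A e} :=
    odd_card_isCutEdge hv₁ hodd1 fun v hv hne => heven v hne fun hv₂ => hpath (hv₂ ▸ hv)
  have hℓ_cut : IsCutEdge ends A ℓ := hT.1.isCutEdge_of_not_reach hpath
  obtain ⟨e₀, ⟨-, he₀ℓ⟩, he₀⟩ := exists_isCutEdge_of_reach (h1PI ℓ v₁ v₂) hv₁ hpath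
  obtain ⟨ℓ₁, h₁, ℓ₂, h₂, h₁ℓ, h₂ℓ, h₁₂⟩ := exists_pair_ne_of_odd_card hA_cut
    ((mem_filter_univ _).mpr hℓ_cut) ((mem_filter_univ _).mpr he₀) (Ne.symm he₀ℓ)
  have hswap (f : E) (hf : IsCutEdge ends A f) (hfℓ : f ≠ ℓ) :
      f ∉ T ∧ IsSpanningTree ends (insert f (T \ {ℓ})) :=
    ⟨fun hfT => not_isCutEdge_reach_of_mem (S := T \ {ℓ}) ⟨hfT, hfℓ⟩ hf,
      hT.exchange hℓT (not_reach_of_isCutEdge_reach hf)⟩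
  obtain ⟨h₁T, hT₁⟩ := hswap ℓ₁ ((mem_filter_univ _).mp h₁) h₁ℓ
  obtain ⟨h₂T, hT₂⟩ := hswap ℓ₂ ((mem_filter_univ _).mp h₂) h₂ℓ
  exact ⟨ℓ₁, ℓ₂, h₁T, h₂T, h₁₂, hT₁, hT₂⟩

/-- Let `G` be a connected, 2-edge-connected (1PI) multigraph
with two external vertices `v₁ ≠ v₂` carrying one external leg each (so their
internal degree is odd and all other degrees are even).  Let `T` be a spanning
tree and `ℓ` an edge on the unique path in `T` from `v₁` to `v₂` (i.e. `ℓ ∈ T`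
and removing `ℓ` from `T` separates `v₁` from `v₂`).  Then there are two
distinct non-tree edges `ℓ₁ ≠ ℓ₂` such that replacing `ℓ` in `T` by either one
again yields a spanning tree; equivalently `ℓ` lies on two overlapping loops. -/
theorem two_overlapping_loops
    {V E : Type*} [Fintype V] [Fintype E] [DecidableEq V] [DecidableEq E]
    (ends : E → V × V) (v₁ v₂ : V) (hv : v₁ ≠ v₂)
    (hconn : ConnOn ends Set.univ)
    (h1PI : ∀ e : E, ConnOn ends (Set.univ \ {e}))
    (heven : ∀ v : V, v ≠ v₁ → v ≠ v₂ → Even (mdeg ends v))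
    (hodd1 : Odd (mdeg ends v₁)) (hodd2 : Odd (mdeg ends v₂))
    (T : Set E) (hT : IsSpanningTree ends T)
    (ℓ : E) (hℓT : ℓ ∈ T)
    (hpath : ¬ Relation.ReflTransGen (EdgeRel ends (T \ {ℓ})) v₁ v₂) :
    ∃ ℓ₁ ℓ₂ : E, ℓ₁ ∉ T ∧ ℓ₂ ∉ T ∧ ℓ₁ ≠ ℓ₂ ∧
      IsSpanningTree ends (insert ℓ₁ (T \ {ℓ})) ∧
      IsSpanningTree ends (insert ℓ₂ (T \ {ℓ})) :=
  two_overlapping_loops_general ends v₁ v₂ h1PI heven hodd1 T hT ℓ hℓT hpath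
end
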